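/- Fix R > 0. Let μ be a Borel probability measure on ℝ^d with density in L^r(dx) for some r > 1, let K ⊆ ℝ^d be compact, and let (μ_k) be a sequence of Borel probability measures converging narrowly (weakly) to μ. Then sup_{x ∈ K} |μ_k(B_R(x)) − μ(B_R(x))| → 0 as k → ∞. -/

import Mathlib

open MeasureTheory

/-- Main claim of Section 5: if μ_k → μ narrowly and μ has an L^r density
(r > 1), then μ_k(B_R(x)) → μ(B_R(x)) uniformly over x in a compact set K. -/
theorem stmt_4 (d : ℕ) (R : ℝ) (hR : 0 < R)
    (μ : Measure (Fin d → ℝ)) [IsProbabilityMeasure μ]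
    (r : ℝ) (hr : 1 < r)
    (p : (Fin d → ℝ) → ℝ) (hp_nonneg : ∀ x, 0 ≤ p x)
    (hμ : μ = volume.withDensity (fun x => ENNReal.ofReal (p x)))
    (hpLr : MemLp p (ENNReal.ofReal r) volume)
    (μk : ℕ → Measure (Fin d → ℝ)) (hμk : ∀ k, IsProbabilityMeasure (μk k))
    (hconv : ∀ f : BoundedContinuousFunction (Fin d → ℝ) ℝ,
      Filter.Tendsto (fun k => ∫ x, f x ∂(μk k)) Filter.atTop
        (nhds (∫ x, f x ∂μ)))
    (K : Set (Fin d → ℝ)) (hK : IsCompact K) :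
    Filter.Tendsto
      (fun k => ⨆ x : K, |((μk k) (Metric.ball (x : Fin d → ℝ) R)).toReal
        - (μ (Metric.ball (x : Fin d → ℝ) R)).toReal|)
      Filter.atTop (nhds 0) := by
  classical
  -- probability measure wrappers and narrow convergence
  let ν : ProbabilityMeasure (Fin d → ℝ) := ⟨μ, ‹_›⟩
  let νk : ℕ → ProbabilityMeasure (Fin d → ℝ) := fun k => ⟨μk k, hμk k⟩
  have htend : Filter.Tendsto νk Filter.atTop (nhds ν) :=
    ProbabilityMeasure.tendsto_iff_forall_integral_tendsto.mpr fun f => hconv f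
  -- μ vanishes on spheres
  have hsph : ∀ (x : Fin d → ℝ) (s : ℝ), s ≠ 0 → μ (Metric.sphere x s) = 0 := by
    intro x s hs
    have hvol : volume (Metric.sphere x s) = 0 :=
      Measure.addHaar_sphere_of_ne_zero (μ := (volume : Measure (Fin d → ℝ))) x hs
    rw [hμ]
    exact (withDensity_absolutelyContinuous _ _) hvol
  -- pointwise convergence of ball measures
  have hpt : ∀ (x : Fin d → ℝ) (s : ℝ), 0 < s →
      Filter.Tendsto (fun k => ((μk k) (Metric.ball x s)).toReal) Filter.atTop
        (nhds ((μ (Metric.ball x s)).toReal)) := by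
    intro x s hs
    have hnull : (ν : Measure (Fin d → ℝ)) (frontier (Metric.ball x s)) = 0 :=
      measure_mono_null Metric.frontier_ball_subset_sphere (hsph x s hs.ne')
    have h := ProbabilityMeasure.tendsto_measure_of_null_frontier_of_tendsto' htend hnull
    exact (ENNReal.tendsto_toReal (measure_ne_top μ _)).comp h
  -- total mass of density is finite
  have hI : ∫⁻ x, ENNReal.ofReal (p x) ∂volume ≠ ⊤ := by
    have h1 : μ Set.univ = 1 := measure_univ
    rw [hμ, withDensity_apply _ MeasurableSet.univ, Measure.restrict_univ] at h1
    simp [h1]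
  rw [NormedAddCommGroup.tendsto_nhds_zero]
  intro ε hε
  -- absolute continuity ε-δ
  obtain ⟨δ₀, hδ₀, hsmall⟩ := exists_pos_setLIntegral_lt_of_measure_lt hI
      (ε := ENNReal.ofReal (ε/4)) (by simp [ENNReal.ofReal_eq_zero]; linarith)
  -- choose δ ∈ (0, R) with small annulus volume
  obtain ⟨δ, hδpos, hδR, hδvol⟩ : ∃ δ : ℝ, 0 < δ ∧ δ < R ∧
      ENNReal.ofReal ((2*(R+δ))^d - (2*(R-δ))^d) < δ₀ := by
    have hcont : Filter.Tendsto
        (fun δ : ℝ => ENNReal.ofReal ((2*(R+δ))^d - (2*(R-δ))^d)) (nhds 0) (nhds 0) := by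
      have hc : Continuous fun δ : ℝ => ENNReal.ofReal ((2*(R+δ))^d - (2*(R-δ))^d) := by
        apply ENNReal.continuous_ofReal.comp; continuity
      have := hc.tendsto 0
      simpa using this
    have hev := hcont.eventually_lt_const hδ₀
    obtain ⟨η, hη, hball⟩ := Metric.eventually_nhds_iff.mp hev
    refine ⟨min (η/2) (R/2), by positivity, ?_, ?_⟩
    · exact lt_of_le_of_lt (min_le_right _ _) (by linarith)
    · apply hball
      rw [Real.dist_eq, sub_zero, abs_of_nonneg (by positivity)]
      exact lt_of_le_of_lt (min_le_left _ _) (by linarith)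
  -- uniform annulus bound
  have hann : ∀ x : Fin d → ℝ,
      μ (Metric.ball x (R+δ)) ≤ μ (Metric.ball x (R-δ)) + ENNReal.ofReal (ε/4) := by
    intro x
    have hsub : Metric.ball x (R-δ) ⊆ Metric.ball x (R+δ) :=
      Metric.ball_subset_ball (by linarith)
    have hA : MeasurableSet (Metric.ball x (R+δ) \ Metric.ball x (R-δ)) :=
      measurableSet_ball.diff measurableSet_ball
    have hvolA : volume (Metric.ball x (R+δ) \ Metric.ball x (R-δ)) < δ₀ := by
      rw [measure_diff hsub measurableSet_ball.nullMeasurableSet measure_ball_lt_top.ne,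
        Real.volume_pi_ball x (by linarith : (0:ℝ) < R+δ),
        Real.volume_pi_ball x (by linarith : (0:ℝ) < R-δ)]
      simp only [Fintype.card_fin]
      rw [← ENNReal.ofReal_sub _ (pow_nonneg (by linarith) d)]
      simpa using hδvol
    have hμA : μ (Metric.ball x (R+δ) \ Metric.ball x (R-δ)) ≤ ENNReal.ofReal (ε/4) := by
      rw [hμ, withDensity_apply _ hA]
      exact (hsmall _ hvolA).le
    calc μ (Metric.ball x (R+δ))
        ≤ μ (Metric.ball x (R-δ) ∪ (Metric.ball x (R+δ) \ Metric.ball x (R-δ))) :=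
          measure_mono (by intro y hy; by_cases h : y ∈ Metric.ball x (R-δ) <;>
            simp [h, hy, Set.mem_union, Set.mem_diff])
      _ ≤ μ (Metric.ball x (R-δ)) + μ (Metric.ball x (R+δ) \ Metric.ball x (R-δ)) :=
          measure_union_le _ _
      _ ≤ μ (Metric.ball x (R-δ)) + ENNReal.ofReal (ε/4) := by gcongr
  -- finite net
  obtain ⟨t, htK, htcover⟩ := hK.elim_nhds_subcover (fun x => Metric.ball x δ)
    (fun x _ => Metric.ball_mem_nhds x hδpos)
  -- eventual closeness at net points
  have hev : ∀ᶠ k in Filter.atTop, ∀ i ∈ t,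
      |((μk k) (Metric.ball i (R+δ))).toReal - (μ (Metric.ball i (R+δ))).toReal| < ε/4 ∧
      |((μk k) (Metric.ball i (R-δ))).toReal - (μ (Metric.ball i (R-δ))).toReal| < ε/4 := by
    rw [Filter.eventually_all_finset]
    intro i _
    have h1 := Metric.tendsto_nhds.mp (hpt i (R+δ) (by linarith)) (ε/4) (by linarith)
    have h2 := Metric.tendsto_nhds.mp (hpt i (R-δ) (by linarith)) (ε/4) (by linarith)
    filter_upwards [h1, h2] with k hk1 hk2
    rw [Real.dist_eq] at hk1 hk2
    exact ⟨hk1, hk2⟩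
  filter_upwards [hev] with k hk
  have hterm : ∀ x : K,
      |((μk k) (Metric.ball (x : Fin d → ℝ) R)).toReal
        - (μ (Metric.ball (x : Fin d → ℝ) R)).toReal| ≤ ε/2 := by
    rintro ⟨x, hx⟩
    obtain ⟨i, hit, hxi⟩ : ∃ i ∈ t, x ∈ Metric.ball i δ := by
      have := htcover hx
      simpa using this
    have hxi' : dist x i < δ := Metric.mem_ball.mp hxi
    haveI := hμk k
    -- inclusions
    have hs1 : Metric.ball x R ⊆ Metric.ball i (R+δ) := by
      intro y hy
      have : dist y i ≤ dist y x + dist x i := dist_triangle _ _ _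
      rw [Metric.mem_ball] at hy ⊢
      linarith
    have hs2 : Metric.ball i (R-δ) ⊆ Metric.ball x R := by
      intro y hy
      have h3 : dist y x ≤ dist y i + dist i x := dist_triangle _ _ _
      have h4 : dist i x = dist x i := dist_comm _ _
      rw [Metric.mem_ball] at hy ⊢
      linarith
    obtain ⟨hk1, hk2⟩ := hk i hit
    -- toReal monotonicity facts
    have e1 : ((μk k) (Metric.ball x R)).toReal ≤ ((μk k) (Metric.ball i (R+δ))).toReal :=
      ENNReal.toReal_mono (measure_ne_top _ _) (measure_mono hs1)
    have e2 : ((μk k) (Metric.ball i (R-δ))).toReal ≤ ((μk k) (Metric.ball x R)).toReal :=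
      ENNReal.toReal_mono (measure_ne_top _ _) (measure_mono hs2)
    have e3 : (μ (Metric.ball x R)).toReal ≤ (μ (Metric.ball i (R+δ))).toReal :=
      ENNReal.toReal_mono (measure_ne_top _ _) (measure_mono hs1)
    have e4 : (μ (Metric.ball i (R-δ))).toReal ≤ (μ (Metric.ball x R)).toReal :=
      ENNReal.toReal_mono (measure_ne_top _ _) (measure_mono hs2)
    have e5 : (μ (Metric.ball i (R+δ))).toReal ≤ (μ (Metric.ball i (R-δ))).toReal + ε/4 := by
      have := hann i
      have h6 := ENNReal.toReal_mono
        (by finiteness) this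
      rwa [ENNReal.toReal_add (measure_ne_top _ _) ENNReal.ofReal_ne_top,
        ENNReal.toReal_ofReal (by linarith)] at h6
    rw [abs_lt] at hk1 hk2
    rw [abs_le]
    constructor <;> [nlinarith; nlinarith]
  have hnn : 0 ≤ ⨆ x : K, |((μk k) (Metric.ball (x : Fin d → ℝ) R)).toReal
      - (μ (Metric.ball (x : Fin d → ℝ) R)).toReal| :=
    Real.iSup_nonneg fun x => abs_nonneg _
  rw [Real.norm_eq_abs, abs_of_nonneg hnn]
  exact lt_of_le_of_lt (Real.iSup_le hterm (by linarith)) (by linarith)
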